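/- arXiv:2604.13735 — 3 statements merged into one kernel-verified Lean document; each statement's English description precedes it below -/
import Mathlib

section
/- Let H be a Hermitian 2^n × 2^n complex matrix whose smallest eigenvalue E_g has multiplicity one, let v be a unit eigenvector of H for E_g and ρ^g = v vᴴ, and let E_1 be the smallest eigenvalue of H restricted to the orthogonal complement of v (the second-smallest eigenvalue). Then for every density matrix ρ, Re Tr[ρ H] ≥ E_g · p + E_1 · (1 − p), where p = Re Tr[ρ ρ^g]. -/
open Matrix
open scoped ComplexOrder

/-!
With `P = v vᴴ`, the matrix `M = H - E_g P - E_1 (1 - P)` is positive semidefinite: it kills `v`,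
and on `v^⊥` it acts as `H - E_1`, which is nonnegative there by the variational characterisation
of `E_1`. Hence `Tr[ρ M] ≥ 0` for every density matrix `ρ`, and expanding with `Tr ρ = 1` gives
the bound.
-/

namespace Matrix

theorem PosSemidef.trace_mul_nonneg {𝕜 ι : Type*} [RCLike 𝕜] [Fintype ι]
    {A B : Matrix ι ι 𝕜} (hA : A.PosSemidef) (hB : B.PosSemidef) : 0 ≤ (A * B).trace := by
  classical
  open scoped MatrixOrder Matrix.Norms.L2Operator in
  obtain ⟨C, rfl⟩ := CStarAlgebra.nonneg_iff_eq_star_mul_self.mp hA.nonneg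
  rw [star_eq_conjTranspose, Matrix.mul_assoc, trace_mul_comm]
  exact (hB.mul_mul_conjTranspose_same C).trace_nonneg

variable {ι : Type*} [Fintype ι]

theorem IsHermitian.star_add_smul_dotProduct_mulVec_add_smul {R : Type*} [CommSemiring R]
    [StarRing R] {M : Matrix ι ι R} (hM : M.IsHermitian) {v : ι → R} (hMv : M *ᵥ v = 0)
    (x : ι → R) (c : R) :
    star (x + c • v) ⬝ᵥ M *ᵥ (x + c • v) = star x ⬝ᵥ M *ᵥ x := by
  have hvM : star (c • v) ᵥ* M = 0 := by
    rw [← hM.eq, ← star_mulVec, mulVec_smul, hMv, smul_zero, star_zero]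
  rw [mulVec_add, mulVec_smul, hMv, smul_zero, add_zero, star_add, add_dotProduct,
    dotProduct_mulVec (star (c • v)), hvM, zero_dotProduct, add_zero]

theorem vecMulVec_star_mulVec {R : Type*} [CommSemiring R] [StarRing R] (v x : ι → R) :
    vecMulVec v (star v) *ᵥ x = (star v ⬝ᵥ x) • v := by
  simp [vecMulVec_mulVec]

theorem posSemidef_sub_smul_vecMulVec_sub_smul_one_sub [DecidableEq ι] {H : Matrix ι ι ℂ}
    (hH : H.IsHermitian) {v : ι → ℂ} {Eg E1 : ℝ} (hv : star v ⬝ᵥ v = 1)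
    (hev : H *ᵥ v = (Eg : ℂ) • v)
    (hE1 : ∀ w, star v ⬝ᵥ w = 0 → E1 * (star w ⬝ᵥ w).re ≤ (star w ⬝ᵥ H *ᵥ w).re) :
    (H - (Eg : ℂ) • vecMulVec v (star v) - (E1 : ℂ) • (1 - vecMulVec v (star v))).PosSemidef := by
  set M := H - (Eg : ℂ) • vecMulVec v (star v) - (E1 : ℂ) • (1 - vecMulVec v (star v))
  have hP := (posSemidef_vecMulVec_self_star v).isHermitian
  have hM : M.IsHermitian :=
    (hH.sub (hP.smul (Complex.conj_ofReal Eg))).sub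
      ((isHermitian_one.sub hP).smul (Complex.conj_ofReal E1))
  have hMv : M *ᵥ v = 0 := by
    simp only [M, sub_mulVec, smul_mulVec, one_mulVec, vecMulVec_star_mulVec, hv, hev, one_smul,
      sub_self, smul_zero]
  refine .of_dotProduct_mulVec_nonneg hM fun x => ?_
  obtain ⟨w, c, hw, rfl⟩ : ∃ w c, star v ⬝ᵥ w = 0 ∧ x = w + c • v :=
    ⟨x - (star v ⬝ᵥ x) • v, star v ⬝ᵥ x, by simp [dotProduct_sub, hv], by simp⟩
  have hMw : M *ᵥ w = H *ᵥ w - (E1 : ℂ) • w := by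
    simp only [M, sub_mulVec, smul_mulVec, one_mulVec, vecMulVec_star_mulVec, hw, zero_smul,
      smul_zero, sub_zero]
  rw [hM.star_add_smul_dotProduct_mulVec_add_smul hMv, hMw, dotProduct_sub, dotProduct_smul,
    smul_eq_mul, Complex.nonneg_iff]
  have hHw := hH.im_star_dotProduct_mulVec_self w
  have hww := (Complex.nonneg_iff.mp (dotProduct_star_self_nonneg w)).2
  constructor
  · simpa only [Complex.sub_re, Complex.mul_re, Complex.ofReal_re, Complex.ofReal_im, zero_mul,
      sub_zero, sub_nonneg] using hE1 w hw
  · simp only [Complex.sub_im, Complex.mul_im, Complex.ofReal_re, Complex.ofReal_im, zero_mul,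
      add_zero, ← hww, mul_zero, sub_zero]
    exact hHw.symm

end Matrix

theorem re_trace_ge_ground_overlap_bound_general (n : ℕ)
    (H : Matrix (Fin (2 ^ n)) (Fin (2 ^ n)) ℂ) (hH : H.IsHermitian)
    (v : Fin (2 ^ n) → ℂ) (Eg E1 : ℝ)
    -- `v` is a unit eigenvector of `H` with eigenvalue `Eg`
    (hv : star v ⬝ᵥ v = 1)
    (hev : H *ᵥ v = (Eg : ℂ) • v)
    -- the eigenvalue `Eg` has multiplicity one, and `E1` is the second-smallest
    -- eigenvalue: it is the smallest eigenvalue of `H` restricted to the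
    -- orthogonal complement of `v`
    (hE1_min : ∀ w : Fin (2 ^ n) → ℂ, star v ⬝ᵥ w = 0 →
      E1 * (star w ⬝ᵥ w).re ≤ (star w ⬝ᵥ (H *ᵥ w)).re)
    -- `ρ` is a density matrix
    (ρ : Matrix (Fin (2 ^ n)) (Fin (2 ^ n)) ℂ) (hρ : ρ.PosSemidef) (hρtr : ρ.trace = 1) :
    Eg * ((ρ * vecMulVec v (star v)).trace).re
      + E1 * (1 - ((ρ * vecMulVec v (star v)).trace).re) ≤ ((ρ * H).trace).re := by
  have hM := posSemidef_sub_smul_vecMulVec_sub_smul_one_sub hH hv hev hE1_min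
  have h0 := (Complex.nonneg_iff.mp (hρ.trace_mul_nonneg hM)).1
  rw [Matrix.mul_sub, Matrix.mul_sub, Matrix.mul_smul, Matrix.mul_smul, Matrix.mul_sub,
    Matrix.mul_one, trace_sub, trace_sub, trace_smul, trace_smul, trace_sub, hρtr] at h0
  simp only [smul_eq_mul, Complex.sub_re, Complex.mul_re, Complex.ofReal_re, Complex.ofReal_im,
    zero_mul, sub_zero, Complex.one_re, Complex.sub_im, Complex.one_im, zero_sub, mul_neg,
    neg_zero, sub_nonneg] at h0
  linarith

theorem re_trace_ge_ground_overlap_bound (n : ℕ)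
    (H : Matrix (Fin (2 ^ n)) (Fin (2 ^ n)) ℂ) (hH : H.IsHermitian)
    (v : Fin (2 ^ n) → ℂ) (Eg E1 : ℝ)
    -- `v` is a unit eigenvector of `H` with eigenvalue `Eg`
    (hv : star v ⬝ᵥ v = 1)
    (hev : H *ᵥ v = (Eg : ℂ) • v)
    -- the eigenvalue `Eg` has multiplicity one, and `E1` is the second-smallest
    -- eigenvalue: it is the smallest eigenvalue of `H` restricted to the
    -- orthogonal complement of `v`
    (hgap : Eg < E1)
    (hE1_min : ∀ w : Fin (2 ^ n) → ℂ, star v ⬝ᵥ w = 0 →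
      E1 * (star w ⬝ᵥ w).re ≤ (star w ⬝ᵥ (H *ᵥ w)).re)
    (hE1_eig : ∃ w : Fin (2 ^ n) → ℂ, w ≠ 0 ∧ star v ⬝ᵥ w = 0 ∧ H *ᵥ w = (E1 : ℂ) • w)
    -- `ρ` is a density matrix
    (ρ : Matrix (Fin (2 ^ n)) (Fin (2 ^ n)) ℂ) (hρ : ρ.PosSemidef) (hρtr : ρ.trace = 1) :
    Eg * ((ρ * vecMulVec v (star v)).trace).re
      + E1 * (1 - ((ρ * vecMulVec v (star v)).trace).re) ≤ ((ρ * H).trace).re :=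
  re_trace_ge_ground_overlap_bound_general n H hH v Eg E1 hv hev hE1_min ρ hρ hρtr
end

section
/- Let U be a unitary 2^n × 2^n complex matrix and let the n-qubit operator space be an internal orthogonal direct sum of finitely many subspaces B_κ, each conjugation-invariant under U, with orthogonal projections P_κ. Let H be a Hermitian matrix whose smallest eigenvalue E_g has multiplicity one, with unit eigenvector v, ρ^g = v vᴴ, and second-smallest eigenvalue E_1. Then for every density matrix ρ^i, writing π_g = Σ_κ ‖P_κ(ρ^g)‖ · ‖P_κ(ρ^i)‖, one has Re Tr[(U ρ^i Uᴴ) H] ≥ E_g · π_g + E_1 · (1 − π_g). -/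
/-!
Conjugation by `U` commutes with every `P κ` and preserves the Hilbert–Schmidt norm. Hence, by
Parseval over the orthogonal decomposition and Cauchy–Schwarz in each block, the overlap
`f = Re Tr(ρ^g U ρ^i Uᴴ)` of the ground state with the evolved state is at most `π_g`.
On the other hand the spectral gap makes `H - E_g ρ^g - E_1 (1 - ρ^g)` positive semidefinite, so
`Re Tr(ρ H) ≥ E_g f + E_1 (1 - f)` for every density matrix `ρ`. Since `E_g < E_1` the right side
decreases in `f`, so `f` may be replaced by `π_g`.
-/

open Matrix

/-- The Hilbert–Schmidt (Frobenius) norm of a matrix, induced by the inner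
product `⟨A, B⟩ = Tr(Aᴴ B)`. -/
noncomputable def hsNorm {N : ℕ} (A : Matrix (Fin N) (Fin N) ℂ) : ℝ :=
  Real.sqrt ((Aᴴ * A).trace.re)

/-- `P` is the orthogonal projection onto the subspace `B` of the operator space,
with respect to the Frobenius inner product `⟨A, C⟩ = Tr(Aᴴ C)`: every value of `P`
lies in `B`, and `A - P A` is orthogonal to `B`. -/
def IsHSOrthogonalProjection {N : ℕ} (B : Submodule ℂ (Matrix (Fin N) (Fin N) ℂ))
    (P : Matrix (Fin N) (Fin N) ℂ →ₗ[ℂ] Matrix (Fin N) (Fin N) ℂ) : Prop :=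
  (∀ A, P A ∈ B) ∧ ∀ A, ∀ C ∈ B, ((A - P A)ᴴ * C).trace = 0

/-- A subspace `B` of the operator space is conjugation-invariant under a
unitary `U` if `U A Uᴴ ∈ B` and `Uᴴ A U ∈ B` for every `A ∈ B`. -/
def ConjInvariant {N : ℕ} (U : Matrix (Fin N) (Fin N) ℂ)
    (B : Submodule ℂ (Matrix (Fin N) (Fin N) ℂ)) : Prop :=
  ∀ A ∈ B, U * A * Uᴴ ∈ B ∧ Uᴴ * A * U ∈ B

open scoped ComplexOrder

section DensityMatrices

variable {m : Type*} [Fintype m]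

lemma Matrix.PosSemidef.trace_mul_nonneg_s4 {A B : Matrix m m ℂ} (hA : A.PosSemidef)
    (hB : B.PosSemidef) : 0 ≤ (A * B).trace := by
  classical
  open scoped MatrixOrder in
  obtain ⟨S, rfl⟩ := CStarAlgebra.nonneg_iff_eq_star_mul_self.mp hA.nonneg
  rw [star_eq_conjTranspose, Matrix.mul_assoc, trace_mul_comm]
  exact (hB.mul_mul_conjTranspose_same S).trace_nonneg

lemma Matrix.IsHermitian.posSemidef_of_re_nonneg {M : Matrix m m ℂ} (hM : M.IsHermitian)
    (h : ∀ x, 0 ≤ (star x ⬝ᵥ (M *ᵥ x)).re) : M.PosSemidef :=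
  .of_dotProduct_mulVec_nonneg hM fun x =>
    RCLike.nonneg_iff.mpr ⟨h x, hM.im_star_dotProduct_mulVec_self x⟩

lemma posSemidef_sub_ground_sub_excited [DecidableEq m] {H : Matrix m m ℂ} (hH : H.IsHermitian)
    {v : m → ℂ} {Eg E1 : ℝ} (hv : star v ⬝ᵥ v = 1) (hev : H *ᵥ v = (Eg : ℂ) • v)
    (hE1 : ∀ w, star v ⬝ᵥ w = 0 → E1 * (star w ⬝ᵥ w).re ≤ (star w ⬝ᵥ (H *ᵥ w)).re) :
    (H - (Eg : ℂ) • vecMulVec v (star v) - (E1 : ℂ) • (1 - vecMulVec v (star v))).PosSemidef := by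
  have hρ := (posSemidef_vecMulVec_self_star v).isHermitian
  have hM : (H - (Eg : ℂ) • vecMulVec v (star v)
      - (E1 : ℂ) • (1 - vecMulVec v (star v))).IsHermitian := by
    simp only [IsHermitian, conjTranspose_sub, conjTranspose_smul, conjTranspose_one,
      Complex.star_def, Complex.conj_ofReal, hH.eq, hρ.eq]
  refine hM.posSemidef_of_re_nonneg fun x => ?_
  set c := star v ⬝ᵥ x
  set w := x - c • v
  have hx : x = w + c • v := (sub_add_cancel x _).symm
  have hvw : star v ⬝ᵥ w = 0 := by
    simp only [w, dotProduct_sub, dotProduct_smul, hv, smul_eq_mul, mul_one, c, sub_self]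
  have hwv : star w ⬝ᵥ v = 0 := by rw [star_dotProduct, hvw, star_zero]
  have hvHw : star v ⬝ᵥ (H *ᵥ w) = 0 := by
    rw [dotProduct_mulVec, ← hH.eq, ← star_mulVec, hev, star_smul, smul_dotProduct, hvw, smul_zero]
  have hquad : star x ⬝ᵥ ((H - (Eg : ℂ) • vecMulVec v (star v)
      - (E1 : ℂ) • (1 - vecMulVec v (star v))) *ᵥ x)
      = star w ⬝ᵥ (H *ᵥ w) - E1 * (star w ⬝ᵥ w) := by
    rw [hx]
    simp only [sub_mulVec, smul_mulVec, mulVec_add, mulVec_smul, one_mulVec, vecMulVec_mulVec,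
      dotProduct_add, add_dotProduct, dotProduct_smul, smul_dotProduct, dotProduct_sub,
      star_add, star_smul, hev, hv, hvw, hwv, hvHw, smul_eq_mul,
      MulOpposite.smul_eq_mul_unop, MulOpposite.unop_op, Complex.star_def]
    ring
  rw [hquad, Complex.sub_re, Complex.re_ofReal_mul]
  linarith [hE1 w hvw]

lemma re_trace_mul_ge_of_spectralGap [DecidableEq m] {ρ H : Matrix m m ℂ} (hρ : ρ.PosSemidef)
    (hρtr : ρ.trace = 1) (hH : H.IsHermitian) {v : m → ℂ} {Eg E1 : ℝ} (hv : star v ⬝ᵥ v = 1)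
    (hev : H *ᵥ v = (Eg : ℂ) • v)
    (hE1 : ∀ w, star v ⬝ᵥ w = 0 → E1 * (star w ⬝ᵥ w).re ≤ (star w ⬝ᵥ (H *ᵥ w)).re) :
    Eg * (ρ * vecMulVec v (star v)).trace.re + E1 * (1 - (ρ * vecMulVec v (star v)).trace.re)
      ≤ (ρ * H).trace.re := by
  have h := (Complex.le_def.mp
    (hρ.trace_mul_nonneg_s4 (posSemidef_sub_ground_sub_excited hH hv hev hE1))).1
  simp only [Matrix.mul_sub, Matrix.mul_smul, Matrix.mul_one, trace_sub, trace_smul, hρtr,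
    smul_eq_mul, Complex.sub_re, Complex.re_ofReal_mul, Complex.one_re, Complex.zero_re] at h
  linarith

end DensityMatrices

section HilbertSchmidt

variable {N : ℕ}

lemma re_trace_conjTranspose_mul_le_hsNorm_mul (A C : Matrix (Fin N) (Fin N) ℂ) :
    (Aᴴ * C).trace.re ≤ hsNorm A * hsNorm C := by
  have hinner (X Y : Matrix (Fin N) (Fin N) ℂ) :
      inner ℂ (WithLp.toLp 2 X.vec) (WithLp.toLp 2 Y.vec) = (Xᴴ * Y).trace := by
    rw [EuclideanSpace.inner_toLp_toLp, dotProduct_comm, star_vec_dotProduct_vec]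
  have hnorm (X : Matrix (Fin N) (Fin N) ℂ) : ‖WithLp.toLp 2 X.vec‖ = hsNorm X := by
    rw [@norm_eq_sqrt_re_inner ℂ, hinner]; rfl
  have h := re_inner_le_norm (𝕜 := ℂ) (WithLp.toLp 2 A.vec) (WithLp.toLp 2 C.vec)
  rw [hinner, hnorm, hnorm] at h
  exact h

lemma hsNorm_unitary_conj {U : Matrix (Fin N) (Fin N) ℂ} (hU : U ∈ unitaryGroup (Fin N) ℂ)
    (A : Matrix (Fin N) (Fin N) ℂ) : hsNorm (U * A * Uᴴ) = hsNorm A := by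
  have hUU : Uᴴ * U = 1 := mem_unitaryGroup_iff'.mp hU
  have h : (U * A * Uᴴ)ᴴ * (U * A * Uᴴ) = U * (Aᴴ * A) * Uᴴ := by
    simp only [conjTranspose_mul, conjTranspose_conjTranspose, Matrix.mul_assoc]
    rw [← Matrix.mul_assoc Uᴴ U, hUU, Matrix.one_mul]
  rw [hsNorm, hsNorm, h, trace_mul_cycle, hUU, Matrix.one_mul]

end HilbertSchmidt

section Projections

variable {N : ℕ}

namespace IsHSOrthogonalProjection

variable {B : Submodule ℂ (Matrix (Fin N) (Fin N) ℂ)}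
  {P : Matrix (Fin N) (Fin N) ℂ →ₗ[ℂ] Matrix (Fin N) (Fin N) ℂ}

lemma apply_eq (hP : IsHSOrthogonalProjection B P) {A X : Matrix (Fin N) (Fin N) ℂ}
    (hX : X ∈ B) (hAX : ∀ C ∈ B, ((A - X)ᴴ * C).trace = 0) : P A = X := by
  have hD (C) (hC : C ∈ B) : ((P A - X)ᴴ * C).trace = 0 := by
    rw [show P A - X = (A - X) - (A - P A) by abel, conjTranspose_sub, Matrix.sub_mul, trace_sub,
      hAX C hC, hP.2 A C hC, sub_zero]
  exact sub_eq_zero.mp (trace_conjTranspose_mul_self_eq_zero_iff.mp (hD _ (B.sub_mem (hP.1 A) hX)))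

lemma apply_conj (hP : IsHSOrthogonalProjection B P) {U : Matrix (Fin N) (Fin N) ℂ}
    (hB : ConjInvariant U B) (A : Matrix (Fin N) (Fin N) ℂ) :
    P (U * A * Uᴴ) = U * P A * Uᴴ := by
  refine hP.apply_eq (hB _ (hP.1 A)).1 fun C hC => ?_
  have h : ((U * A * Uᴴ - U * P A * Uᴴ)ᴴ * C).trace = ((A - P A)ᴴ * (Uᴴ * C * U)).trace := by
    simp only [← Matrix.sub_mul, ← Matrix.mul_sub, conjTranspose_mul,
      conjTranspose_conjTranspose, Matrix.mul_assoc]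
    rw [trace_mul_comm]
    simp only [Matrix.mul_assoc]
  rw [h]
  exact hP.2 _ _ (hB C hC).2

end IsHSOrthogonalProjection

variable {ι : Type*} [Fintype ι] {B : ι → Submodule ℂ (Matrix (Fin N) (Fin N) ℂ)}
  {P : ι → Matrix (Fin N) (Fin N) ℂ →ₗ[ℂ] Matrix (Fin N) (Fin N) ℂ}

lemma sum_hsOrthogonalProjection_apply (htop : (⨆ κ, B κ) = ⊤)
    (horth : ∀ κ κ', κ ≠ κ' → ∀ A ∈ B κ, ∀ C ∈ B κ', (Aᴴ * C).trace = 0)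
    (hP : ∀ κ, IsHSOrthogonalProjection (B κ) (P κ)) (A : Matrix (Fin N) (Fin N) ℂ) :
    ∑ κ, P κ A = A := by
  classical
  -- The residual `D` is orthogonal to every `B κ`, hence to their supremum `⊤`, hence to itself.
  set D := A - ∑ κ, P κ A
  let L : Matrix (Fin N) (Fin N) ℂ →ₗ[ℂ] ℂ :=
    (traceLinearMap (Fin N) ℂ ℂ).comp (LinearMap.mulLeft ℂ Dᴴ)
  have hker (κ : ι) : B κ ≤ LinearMap.ker L := by
    intro C hC
    have hsplit : D = (A - P κ A) - ∑ κ' ∈ Finset.univ.erase κ, P κ' A := by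
      rw [sub_sub, Finset.add_sum_erase _ (fun κ => P κ A) (Finset.mem_univ κ)]
    change (Dᴴ * C).trace = 0
    rw [hsplit, conjTranspose_sub, Matrix.sub_mul, trace_sub, (hP κ).2 A C hC,
      conjTranspose_sum, Finset.sum_mul, trace_sum, Finset.sum_eq_zero, sub_zero]
    exact fun κ' hκ' => horth κ' κ (Finset.ne_of_mem_erase hκ') _ ((hP κ').1 A) C hC
  have hDD : (Dᴴ * D).trace = 0 := (htop ▸ iSup_le hker : ⊤ ≤ LinearMap.ker L) Submodule.mem_top
  exact (sub_eq_zero.mp (trace_conjTranspose_mul_self_eq_zero_iff.mp hDD)).symm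

lemma trace_conjTranspose_mul_eq_sum (htop : (⨆ κ, B κ) = ⊤)
    (horth : ∀ κ κ', κ ≠ κ' → ∀ A ∈ B κ, ∀ C ∈ B κ', (Aᴴ * C).trace = 0)
    (hP : ∀ κ, IsHSOrthogonalProjection (B κ) (P κ)) (A C : Matrix (Fin N) (Fin N) ℂ) :
    (Aᴴ * C).trace = ∑ κ, ((P κ A)ᴴ * P κ C).trace := by
  conv_lhs => rw [← sum_hsOrthogonalProjection_apply htop horth hP A,
    ← sum_hsOrthogonalProjection_apply htop horth hP C]
  rw [conjTranspose_sum, Finset.sum_mul, trace_sum]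
  refine Finset.sum_congr rfl fun κ _ => ?_
  rw [Finset.mul_sum, trace_sum, Finset.sum_eq_single κ]
  · exact fun κ' _ hne => horth κ κ' (Ne.symm hne) _ ((hP κ).1 A) _ ((hP κ').1 C)
  · exact fun h => absurd (Finset.mem_univ κ) h

lemma re_trace_conjTranspose_mul_le_sum_hsNorm (htop : (⨆ κ, B κ) = ⊤)
    (horth : ∀ κ κ', κ ≠ κ' → ∀ A ∈ B κ, ∀ C ∈ B κ', (Aᴴ * C).trace = 0)
    (hP : ∀ κ, IsHSOrthogonalProjection (B κ) (P κ)) (A C : Matrix (Fin N) (Fin N) ℂ) :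
    (Aᴴ * C).trace.re ≤ ∑ κ, hsNorm (P κ A) * hsNorm (P κ C) := by
  rw [trace_conjTranspose_mul_eq_sum htop horth hP, Complex.re_sum]
  exact Finset.sum_le_sum fun κ _ => re_trace_conjTranspose_mul_le_hsNorm_mul _ _

end Projections

theorem reachability_lower_bound_general (n : ℕ) {ι : Type} [Fintype ι]
    (U : Matrix (Fin (2 ^ n)) (Fin (2 ^ n)) ℂ)
    (hU : U ∈ Matrix.unitaryGroup (Fin (2 ^ n)) ℂ)
    (B : ι → Submodule ℂ (Matrix (Fin (2 ^ n)) (Fin (2 ^ n)) ℂ))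
    -- the `B κ` fill up the whole operator space …
    (htop : (⨆ κ, B κ) = ⊤)
    -- … and are mutually orthogonal w.r.t. the Frobenius inner product,
    -- so that the operator space is their internal orthogonal direct sum
    (horth : ∀ κ κ', κ ≠ κ' → ∀ A ∈ B κ, ∀ C ∈ B κ', (Aᴴ * C).trace = 0)
    -- each `B κ` is conjugation-invariant under `U`
    (hinv : ∀ κ, ConjInvariant U (B κ))
    (P : ι → (Matrix (Fin (2 ^ n)) (Fin (2 ^ n)) ℂ →ₗ[ℂ] Matrix (Fin (2 ^ n)) (Fin (2 ^ n)) ℂ))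
    (hP : ∀ κ, IsHSOrthogonalProjection (B κ) (P κ))
    -- `H` is Hermitian with smallest eigenvalue `Eg` of multiplicity one,
    -- unit eigenvector `v`, and second-smallest eigenvalue `E1`
    (H : Matrix (Fin (2 ^ n)) (Fin (2 ^ n)) ℂ) (hH : H.IsHermitian)
    (v : Fin (2 ^ n) → ℂ) (Eg E1 : ℝ)
    (hv : star v ⬝ᵥ v = 1)
    (hev : H *ᵥ v = (Eg : ℂ) • v)
    (hgap : Eg < E1)
    (hE1_min : ∀ w : Fin (2 ^ n) → ℂ, star v ⬝ᵥ w = 0 →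
      E1 * (star w ⬝ᵥ w).re ≤ (star w ⬝ᵥ (H *ᵥ w)).re)
    -- `ρi` is a density matrix
    (ρi : Matrix (Fin (2 ^ n)) (Fin (2 ^ n)) ℂ) (hρi : ρi.PosSemidef) (hρitr : ρi.trace = 1) :
    Eg * (∑ κ, hsNorm (P κ (vecMulVec v (star v))) * hsNorm (P κ ρi))
      + E1 * (1 - ∑ κ, hsNorm (P κ (vecMulVec v (star v))) * hsNorm (P κ ρi))
      ≤ ((U * ρi * Uᴴ * H).trace).re := by
  set ρg := vecMulVec v (star v)
  have hρ : (U * ρi * Uᴴ).PosSemidef := hρi.mul_mul_conjTranspose_same U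
  have hUU : Uᴴ * U = 1 := mem_unitaryGroup_iff'.mp hU
  have hρtr : (U * ρi * Uᴴ).trace = 1 := by rw [trace_mul_cycle, hUU, Matrix.one_mul, hρitr]
  have henergy := re_trace_mul_ge_of_spectralGap hρ hρtr hH hv hev hE1_min
  have hoverlap : (U * ρi * Uᴴ * ρg).trace.re ≤ ∑ κ, hsNorm (P κ ρg) * hsNorm (P κ ρi) :=
    calc (U * ρi * Uᴴ * ρg).trace.re = (ρgᴴ * (U * ρi * Uᴴ)).trace.re := by
          rw [trace_mul_comm, (posSemidef_vecMulVec_self_star v).isHermitian.eq]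
      _ ≤ ∑ κ, hsNorm (P κ ρg) * hsNorm (P κ (U * ρi * Uᴴ)) :=
          re_trace_conjTranspose_mul_le_sum_hsNorm htop horth hP _ _
      _ = ∑ κ, hsNorm (P κ ρg) * hsNorm (P κ ρi) := by
          simp only [(hP _).apply_conj (hinv _), hsNorm_unitary_conj hU]
  linarith [mul_nonneg (sub_nonneg.2 hgap.le) (sub_nonneg.2 hoverlap)]

theorem reachability_lower_bound (n : ℕ) {ι : Type} [Fintype ι]
    (U : Matrix (Fin (2 ^ n)) (Fin (2 ^ n)) ℂ)
    (hU : U ∈ Matrix.unitaryGroup (Fin (2 ^ n)) ℂ)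
    (B : ι → Submodule ℂ (Matrix (Fin (2 ^ n)) (Fin (2 ^ n)) ℂ))
    -- the `B κ` fill up the whole operator space …
    (htop : (⨆ κ, B κ) = ⊤)
    -- … and are mutually orthogonal w.r.t. the Frobenius inner product,
    -- so that the operator space is their internal orthogonal direct sum
    (horth : ∀ κ κ', κ ≠ κ' → ∀ A ∈ B κ, ∀ C ∈ B κ', (Aᴴ * C).trace = 0)
    -- each `B κ` is conjugation-invariant under `U`
    (hinv : ∀ κ, ConjInvariant U (B κ))
    (P : ι → (Matrix (Fin (2 ^ n)) (Fin (2 ^ n)) ℂ →ₗ[ℂ] Matrix (Fin (2 ^ n)) (Fin (2 ^ n)) ℂ))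
    (hP : ∀ κ, IsHSOrthogonalProjection (B κ) (P κ))
    -- `H` is Hermitian with smallest eigenvalue `Eg` of multiplicity one,
    -- unit eigenvector `v`, and second-smallest eigenvalue `E1`
    (H : Matrix (Fin (2 ^ n)) (Fin (2 ^ n)) ℂ) (hH : H.IsHermitian)
    (v : Fin (2 ^ n) → ℂ) (Eg E1 : ℝ)
    (hv : star v ⬝ᵥ v = 1)
    (hev : H *ᵥ v = (Eg : ℂ) • v)
    (hgap : Eg < E1)
    (hE1_min : ∀ w : Fin (2 ^ n) → ℂ, star v ⬝ᵥ w = 0 →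
      E1 * (star w ⬝ᵥ w).re ≤ (star w ⬝ᵥ (H *ᵥ w)).re)
    (hE1_eig : ∃ w : Fin (2 ^ n) → ℂ, w ≠ 0 ∧ star v ⬝ᵥ w = 0 ∧ H *ᵥ w = (E1 : ℂ) • w)
    -- `ρi` is a density matrix
    (ρi : Matrix (Fin (2 ^ n)) (Fin (2 ^ n)) ℂ) (hρi : ρi.PosSemidef) (hρitr : ρi.trace = 1) :
    Eg * (∑ κ, hsNorm (P κ (vecMulVec v (star v))) * hsNorm (P κ ρi))
      + E1 * (1 - ∑ κ, hsNorm (P κ (vecMulVec v (star v))) * hsNorm (P κ ρi))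
      ≤ ((U * ρi * Uᴴ * H).trace).re :=
  reachability_lower_bound_general n U hU B htop horth hinv P hP H hH v Eg E1 hv hev hgap hE1_min ρi
    hρi hρitr
end

section
/- Let x, y : Fin n → Bool have the same parity, i.e. Σ_i x_i ≡ Σ_i y_i (mod 2). Then there exist m : ℕ, matchgate generators γ_1, …, γ_m each taken from the set {I^{⊗(j−1)} ⊗ Z ⊗ I^{⊗(n−j)} : 1 ≤ j ≤ n} ∪ {I^{⊗(j−1)} ⊗ P ⊗ P' ⊗ I^{⊗(n−j−1)} : 1 ≤ j ≤ n−1, P, P' ∈ {X, Y}}, real angles θ_1, …, θ_m, and a complex number ω with |ω| = 1, such that exp(i θ_1 γ_1) * ⋯ * exp(i θ_m γ_m) applied to |x⟩ equals ω • |y⟩. -/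
open Matrix

noncomputable section

/-- The 2×2 Pauli matrix `X`. -/
def σX : Matrix (Fin 2) (Fin 2) ℂ := !![0, 1; 1, 0]

/-- The 2×2 Pauli matrix `Y`. -/
def σY : Matrix (Fin 2) (Fin 2) ℂ := !![0, -Complex.I; Complex.I, 0]

/-- The 2×2 Pauli matrix `Z`. -/
def σZ : Matrix (Fin 2) (Fin 2) ℂ := !![1, 0; 0, -1]

/-- The Kronecker product `P 0 ⊗ P 1 ⊗ ⋯ ⊗ P (n-1)` of `n` 2×2 complex matrices,
realized as a `2^n × 2^n` matrix; rows and columns are indexed by `Fin (2^n)`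
via the equivalence `finFunctionFinEquiv : (Fin n → Fin 2) ≃ Fin (2^n)`, and the
entries are the products of the entries of the factors. -/
def pauliString (n : ℕ) (P : Fin n → Matrix (Fin 2) (Fin 2) ℂ) :
    Matrix (Fin (2 ^ n)) (Fin (2 ^ n)) ℂ :=
  Matrix.of fun i j =>
    ∏ k : Fin n, P k ((finFunctionFinEquiv.symm i : Fin n → Fin 2) k)
      ((finFunctionFinEquiv.symm j : Fin n → Fin 2) k)

/-- The Jordan–Wigner Majorana operators on `n` qubits (with sites and Majorana
indices 0-indexed): for `a = 2μ` this is `Z^{⊗μ} ⊗ X ⊗ I^{⊗(n-μ-1)}` and for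
`a = 2μ+1` it is `Z^{⊗μ} ⊗ Y ⊗ I^{⊗(n-μ-1)}`. -/
def majorana (n : ℕ) (a : Fin (2 * n)) : Matrix (Fin (2 ^ n)) (Fin (2 ^ n)) ℂ :=
  pauliString n fun k =>
    if (k : ℕ) < (a : ℕ) / 2 then σZ
    else if (k : ℕ) = (a : ℕ) / 2 then (if (a : ℕ) % 2 = 0 then σX else σY)
    else 1

/-- `c_S`: the product of the Majorana operators `c_a` for `a ∈ S`, taken in
increasing order of the index `a`. -/
def majoranaProd (n : ℕ) (S : Finset (Fin (2 * n))) :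
    Matrix (Fin (2 ^ n)) (Fin (2 ^ n)) ℂ :=
  ((S.sort (· ≤ ·)).map (majorana n)).prod

/-- `B_κ`: the complex linear span of the products of `κ` distinct Jordan–Wigner
Majorana operators. -/
def BMod (n κ : ℕ) : Submodule ℂ (Matrix (Fin (2 ^ n)) (Fin (2 ^ n)) ℂ) :=
  Submodule.span ℂ (majoranaProd n '' {S : Finset (Fin (2 * n)) | S.card = κ})

/-- The computational basis state `|x⟩` of `n` qubits, as a standard basis
vector of `ℂ^{2^n}`. -/
def ket (n : ℕ) (x : Fin n → Bool) : Fin (2 ^ n) → ℂ :=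
  Pi.single (finFunctionFinEquiv fun i => if x i then 1 else 0) 1

/-- The matchgate generators on `n` qubits: the single-qubit operators
`Z_j = I^{⊗j} ⊗ Z ⊗ I^{⊗(n-j-1)}` and the two-qubit operators
`I^{⊗j} ⊗ P ⊗ P' ⊗ I^{⊗(n-j-2)}` with `P, P' ∈ {X, Y}` on adjacent qubits. -/
def matchgateGens (n : ℕ) : Set (Matrix (Fin (2 ^ n)) (Fin (2 ^ n)) ℂ) :=
  {G | (∃ j : Fin n, G = pauliString n fun k => if k = j then σZ else 1) ∨
    (∃ j : ℕ, j + 1 < n ∧ ∃ P P' : Matrix (Fin 2) (Fin 2) ℂ,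
      (P = σX ∨ P = σY) ∧ (P' = σX ∨ P' = σY) ∧
      G = pauliString n fun k =>
        if (k : ℕ) = j then P else if (k : ℕ) = j + 1 then P' else 1)}

/-! Since `G = X_j X_{j+1}` squares to `1`, `exp (i π/2 G) = i G`, and `G` maps `|x⟩` to the basis
state with bits `j` and `j + 1` flipped. Such adjacent flips preserve the parity of `x`; sweeping
from the last qubit down to qubit `1`, they make `x` agree with `y` away from qubit `0`, and at
qubit `0` the two then agree by parity. -/

open Complex in
theorem exp_I_mul_smul_of_mul_self_eq_one {A : Type*} [Ring A] [Algebra ℂ A] [TopologicalSpace A]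
    [IsTopologicalRing A] [ContinuousSMul ℂ A] [T2Space A] {G : A} (hG : G * G = 1) (z : ℂ) :
    NormedSpace.exp ((I * z) • G) = cos z • 1 + sin z • (I • G) := by
  have hGsq : ∀ k : ℕ, G ^ (2 * k) = 1 := fun k => by rw [pow_mul, sq, hG, one_pow]
  rw [NormedSpace.exp_eq_tsum ℂ]
  refine HasSum.tsum_eq (HasSum.even_add_odd ?_ ?_)
  · convert (hasSum_cos z).smul_const (1 : A) using 2 with k
    rw [smul_pow, hGsq, smul_smul, mul_pow, pow_mul I, I_sq]
    ring_nf
  · convert (hasSum_sin z).smul_const (I • G) using 2 with k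
    rw [smul_pow, pow_succ G, hGsq, one_mul, smul_smul, smul_smul, mul_pow, pow_succ I, pow_mul I,
      I_sq]
    ring_nf

theorem exp_I_mul_pi_div_two_smul_of_mul_self_eq_one {A : Type*} [Ring A] [Algebra ℂ A]
    [TopologicalSpace A] [IsTopologicalRing A] [ContinuousSMul ℂ A] [T2Space A] {G : A}
    (hG : G * G = 1) :
    NormedSpace.exp ((Complex.I * ((Real.pi / 2 : ℝ) : ℂ)) • G) = Complex.I • G := by
  rw [exp_I_mul_smul_of_mul_self_eq_one hG, ← Complex.ofReal_cos, ← Complex.ofReal_sin,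
    Real.cos_pi_div_two, Real.sin_pi_div_two]
  simp

theorem σX_mul_self : σX * σX = 1 := by
  ext i j
  fin_cases i <;> fin_cases j <;> simp [σX]

theorem σX_mulVec_single (b : Fin 2) : σX *ᵥ Pi.single b 1 = Pi.single b.rev 1 := by
  ext i
  fin_cases b <;> fin_cases i <;> simp [σX]

namespace pauliString

variable {n : ℕ}

theorem mul (P Q : Fin n → Matrix (Fin 2) (Fin 2) ℂ) :
    pauliString n P * pauliString n Q = pauliString n fun k => P k * Q k := by
  ext i j
  simp only [pauliString, Matrix.mul_apply, Matrix.of_apply]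
  rw [← finFunctionFinEquiv.sum_comp, Fintype.prod_sum]
  refine Finset.sum_congr rfl fun m _ => ?_
  rw [Equiv.symm_apply_apply, ← Finset.prod_mul_distrib]

theorem one : pauliString n (fun _ => 1) = 1 := by
  ext i j
  simp only [pauliString, Matrix.of_apply, Matrix.one_apply, Fintype.prod_boole]
  congr 1
  exact propext (funext_iff.symm.trans finFunctionFinEquiv.symm.injective.eq_iff)

theorem mulVec_single (P : Fin n → Matrix (Fin 2) (Fin 2) ℂ) (f g : Fin n → Fin 2)
    (h : ∀ k, P k *ᵥ Pi.single (f k) 1 = Pi.single (g k) 1) :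
    pauliString n P *ᵥ Pi.single (finFunctionFinEquiv f) 1 =
      Pi.single (finFunctionFinEquiv g) 1 := by
  ext i
  have hcol : ∀ k a, P k a (f k) = if a = g k then 1 else 0 := fun k a => by
    simpa [Pi.single_apply] using congrFun (h k) a
  simp only [Matrix.mulVec_single_one, Matrix.col_apply, pauliString, Matrix.of_apply,
    Equiv.symm_apply_apply, hcol, Fintype.prod_boole, Pi.single_apply]
  congr 1
  exact propext (funext_iff.symm.trans finFunctionFinEquiv.symm_apply_eq)

end pauliString

section Qubits

variable {n : ℕ}

def flipAdjacent (j : ℕ) (x : Fin n → Bool) : Fin n → Bool :=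
  fun k => if (k : ℕ) = j ∨ (k : ℕ) = j + 1 then !x k else x k

def AdjacentFlip (x y : Fin n → Bool) : Prop :=
  ∃ j, j + 1 < n ∧ y = flipAdjacent j x

theorem sum_toNat_flipAdjacent {j : ℕ} (hj : j + 1 < n) (x : Fin n → Bool) :
    ∑ i, ((flipAdjacent j x i).toNat : ZMod 2) = ∑ i, ((x i).toNat : ZMod 2) := by
  have hterm : ∀ i : Fin n, ((flipAdjacent j x i).toNat : ZMod 2) =
      (x i).toNat + ((if (i : ℕ) = j then 1 else 0) + (if (i : ℕ) = j + 1 then 1 else 0)) := by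
    intro i
    unfold flipAdjacent
    by_cases h1 : (i : ℕ) = j <;> by_cases h2 : (i : ℕ) = j + 1 <;> cases x i <;>
      simp [h1, h2] <;> decide
  simp only [hterm, Finset.sum_add_distrib]
  rw [Fin.sum_univ_eq_sum_range (fun i => if i = j then (1 : ZMod 2) else 0),
    Fin.sum_univ_eq_sum_range (fun i => if i = j + 1 then (1 : ZMod 2) else 0),
    Finset.sum_ite_eq', Finset.sum_ite_eq', if_pos (Finset.mem_range.2 (by omega)),
    if_pos (Finset.mem_range.2 hj), show (1 + 1 : ZMod 2) = 0 from rfl, add_zero]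

theorem sum_toNat_eq_of_reflTransGen {x y : Fin n → Bool}
    (h : Relation.ReflTransGen AdjacentFlip x y) :
    ∑ i, ((y i).toNat : ZMod 2) = ∑ i, ((x i).toNat : ZMod 2) := by
  induction h with
  | refl => rfl
  | tail _ hyz ih =>
    obtain ⟨j, hj, rfl⟩ := hyz
    rw [sum_toNat_flipAdjacent hj, ih]

theorem exists_reflTransGen_eq_off_zero {k : ℕ} (hk : k < n) (x y : Fin n → Bool)
    (hxy : ∀ i : Fin n, k < i → x i = y i) :
    ∃ z, Relation.ReflTransGen AdjacentFlip x z ∧ ∀ i : Fin n, (i : ℕ) ≠ 0 → z i = y i := by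
  induction k generalizing x with
  | zero => exact ⟨x, .refl, fun i hi => hxy i (Nat.pos_of_ne_zero hi)⟩
  | succ k ih =>
    by_cases hk1 : x ⟨k + 1, hk⟩ = y ⟨k + 1, hk⟩
    · refine ih (by omega) x fun i hi => ?_
      rcases (Nat.succ_le_of_lt hi).eq_or_lt with h | h
      · rwa [show i = ⟨k + 1, hk⟩ from Fin.ext h.symm]
      · exact hxy i h
    · obtain ⟨z, hz, hzy⟩ := ih (by omega) (flipAdjacent k x) fun i hi => by
        rcases (Nat.succ_le_of_lt hi).eq_or_lt with h | h
        · obtain rfl : i = ⟨k + 1, hk⟩ := Fin.ext h.symm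
          simpa [flipAdjacent] using Bool.eq_not.mpr hk1
        · simp only [flipAdjacent, show ¬((i : ℕ) = k ∨ (i : ℕ) = k + 1) by omega, if_false]
          exact hxy i h
      exact ⟨z, .head ⟨k, hk, rfl⟩ hz, hzy⟩

theorem reflTransGen_adjacentFlip_of_sum_toNat_eq {x y : Fin n → Bool}
    (h : ∑ i, ((x i).toNat : ZMod 2) = ∑ i, ((y i).toNat : ZMod 2)) :
    Relation.ReflTransGen AdjacentFlip x y := by
  cases n with
  | zero => exact Subsingleton.elim x y ▸ .refl
  | succ m =>
    obtain ⟨z, hxz, hzy⟩ := exists_reflTransGen_eq_off_zero (Nat.lt_succ_self m) x y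
      fun i hi => absurd i.isLt (by omega)
    have htail : ∀ i : Fin m, z i.succ = y i.succ := fun i => hzy _ (by simp)
    have hsum := (sum_toNat_eq_of_reflTransGen hxz).trans h
    rw [Fin.sum_univ_succ, Fin.sum_univ_succ, Finset.sum_congr rfl fun i _ => by rw [htail i],
      add_left_inj] at hsum
    have h0 : z 0 = y 0 := by
      revert hsum
      cases z 0 <;> cases y 0 <;> decide
    have hzy : z = y := funext fun i => Fin.cases h0 htail i
    exact hzy ▸ hxz

def xxGate (n j : ℕ) : Matrix (Fin (2 ^ n)) (Fin (2 ^ n)) ℂ :=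
  pauliString n fun k => if (k : ℕ) = j then σX else if (k : ℕ) = j + 1 then σX else 1

theorem xxGate_mem_matchgateGens {j : ℕ} (hj : j + 1 < n) : xxGate n j ∈ matchgateGens n :=
  Or.inr ⟨j, hj, σX, σX, Or.inl rfl, Or.inl rfl, rfl⟩

theorem xxGate_mul_self (j : ℕ) : xxGate n j * xxGate n j = 1 := by
  rw [xxGate, pauliString.mul, ← pauliString.one]
  congr 1
  funext k
  split_ifs <;> simp [σX_mul_self]

theorem xxGate_mulVec_ket (j : ℕ) (x : Fin n → Bool) :
    xxGate n j *ᵥ ket n x = ket n (flipAdjacent j x) := by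
  refine pauliString.mulVec_single _ _ _ fun k => ?_
  simp only [flipAdjacent]
  by_cases h1 : (k : ℕ) = j <;> by_cases h2 : (k : ℕ) = j + 1 <;>
    simp only [h1, h2, if_true, if_false, ite_self, or_true, true_or, or_false, Matrix.one_mulVec,
      σX_mulVec_single] <;>
    cases x k <;> rfl

def MatchgateConnected (n : ℕ) (x y : Fin n → Bool) : Prop :=
  ∃ (m : ℕ) (γ : Fin m → Matrix (Fin (2 ^ n)) (Fin (2 ^ n)) ℂ) (θ : Fin m → ℝ) (ω : ℂ),
    (∀ i, γ i ∈ matchgateGens n) ∧ ‖ω‖ = 1 ∧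
    (List.ofFn fun i => NormedSpace.exp ((Complex.I * (θ i : ℂ)) • γ i)).prod *ᵥ
        ket n x = ω • ket n y

theorem MatchgateConnected.refl (x : Fin n → Bool) : MatchgateConnected n x x :=
  ⟨0, Fin.elim0, Fin.elim0, 1, fun i => i.elim0, norm_one, by simp⟩

theorem MatchgateConnected.tail {x y z : Fin n → Bool} (hxy : MatchgateConnected n x y)
    (hyz : AdjacentFlip y z) : MatchgateConnected n x z := by
  obtain ⟨m, γ, θ, ω, hγ, hω, hprod⟩ := hxy
  obtain ⟨j, hj, rfl⟩ := hyz
  refine ⟨m + 1, Fin.cons (xxGate n j) γ, Fin.cons (Real.pi / 2) θ, ω * Complex.I,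
    Fin.cases (xxGate_mem_matchgateGens hj) hγ, by simp [hω], ?_⟩
  rw [List.ofFn_succ, List.prod_cons, ← Matrix.mulVec_mulVec]
  simp only [Fin.cons_zero, Fin.cons_succ]
  rw [hprod, Matrix.mulVec_smul, exp_I_mul_pi_div_two_smul_of_mul_self_eq_one (xxGate_mul_self j),
    Matrix.smul_mulVec, xxGate_mulVec_ket, smul_smul]

theorem matchgateConnected_of_reflTransGen {x y : Fin n → Bool}
    (h : Relation.ReflTransGen AdjacentFlip x y) : MatchgateConnected n x y := by
  induction h with
  | refl => exact .refl x
  | tail _ hyz ih => exact ih.tail hyz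

end Qubits

theorem matchgate_connects_same_parity (n : ℕ) (x y : Fin n → Bool)
    (hparity : (∑ i, (x i).toNat) % 2 = (∑ i, (y i).toNat) % 2) :
    ∃ (m : ℕ) (γ : Fin m → Matrix (Fin (2 ^ n)) (Fin (2 ^ n)) ℂ) (θ : Fin m → ℝ) (ω : ℂ),
      (∀ i, γ i ∈ matchgateGens n) ∧ ‖ω‖ = 1 ∧
      (List.ofFn fun i => NormedSpace.exp ((Complex.I * (θ i : ℂ)) • γ i)).prod *ᵥ
          ket n x = ω • ket n y := by
  have hsum : ∑ i, ((x i).toNat : ZMod 2) = ∑ i, ((y i).toNat : ZMod 2) :=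
    mod_cast (ZMod.natCast_eq_natCast_iff' _ _ 2).mpr hparity
  exact matchgateConnected_of_reflTransGen (reflTransGen_adjacentFlip_of_sum_toNat_eq hsum)
end
end
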